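/- If π ∈ S_n avoids 2-1-3 and avoids 2̄^o-31, then for any two consecutive right-to-left maxima π_{i_j} and π_{i_{j+1}} of π, the difference π_{i_j} - π_{i_{j+1}} is even. -/
import Mathlib


/-- `π` contains the classical pattern 2-1-3: indices `i < j < k` with `π j < π i < π k`. -/
def Contains213 {n : ℕ} (π : Equiv.Perm (Fin n)) : Prop :=
  ∃ i j k : Fin n, i < j ∧ j < k ∧ π j < π i ∧ π i < π k

/-- `π` avoids `2̄^o-31`: for every descent `π i > π (i+1)`, the number of `j < i` with
`π (i+1) < π j < π i` is odd. -/
def AvoidsOddBarred231 {n : ℕ} (π : Equiv.Perm (Fin n)) : Prop :=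
  ∀ i i' : Fin n, (i' : ℕ) = (i : ℕ) + 1 → π i' < π i →
    Odd (Nat.card {j : Fin n // j < i ∧ π i' < π j ∧ π j < π i})

/-- `π p` is a right-to-left maximum of `π`. -/
def IsRLMax {n : ℕ} (π : Equiv.Perm (Fin n)) (p : Fin n) : Prop :=
  ∀ q, p < q → π q < π p

theorem stmt8 (n : ℕ) (π : Equiv.Perm (Fin n))
    (h213 : ¬ Contains213 π) (hodd : AvoidsOddBarred231 π)
    (p q : Fin n) (hpq : p < q) (hp : IsRLMax π p) (hq : IsRLMax π q)
    (hcons : ∀ r, p < r → r < q → ¬ IsRLMax π r) :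
    Even ((π p : ℕ) - (π q : ℕ)) := by
  have hpq' : (p : ℕ) < (q : ℕ) := hpq
  have hpn : (p : ℕ) + 1 < n := lt_of_le_of_lt hpq' q.isLt
  set pp1 : Fin n := ⟨(p : ℕ) + 1, hpn⟩ with hpp1
  have hppp1 : p < pp1 := by
    simp [Fin.lt_def, hpp1]
  have hpp1q : pp1 ≤ q := by
    simp only [Fin.le_def, hpp1]
    omega
  -- Claim A: every entry strictly between p and q is smaller than π q
  have hA : ∀ r : Fin n, p < r → r < q → π r < π q := by
    obtain ⟨m, hmT, hmax⟩ := Finset.exists_max_image (Finset.Ioc p q) π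
      ⟨q, Finset.mem_Ioc.mpr ⟨hpq, le_refl q⟩⟩
    rw [Finset.mem_Ioc] at hmT
    rcases lt_or_eq_of_le hmT.2 with hmq | hmq
    · exfalso
      apply hcons m hmT.1 hmq
      intro s hs
      rcases le_or_gt s q with hsq | hsq
      · have hle : π s ≤ π m := hmax s (Finset.mem_Ioc.mpr ⟨lt_trans hmT.1 hs, hsq⟩)
        exact lt_of_le_of_ne hle (fun h => absurd (π.injective h) (ne_of_gt hs))
      · exact lt_of_lt_of_le (hq s hsq)
          (hmax q (Finset.mem_Ioc.mpr ⟨hpq, le_refl q⟩))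
    · intro r hpr hrq
      have hle : π r ≤ π m := hmax r (Finset.mem_Ioc.mpr ⟨hpr, le_of_lt hrq⟩)
      rw [hmq] at hle
      exact lt_of_le_of_ne hle (fun h => absurd (π.injective h) (ne_of_lt hrq))
  have hqp : π q < π p := hp q hpq
  have hdes : π pp1 < π p := hp pp1 hppp1
  -- π pp1 ≤ π q
  have hpp1le : π pp1 ≤ π q := by
    rcases lt_or_eq_of_le hpp1q with h | h
    · exact le_of_lt (hA pp1 hppp1 h)
    · rw [h]
  -- Set equality
  have hset : ∀ j : Fin n, (j < p ∧ π pp1 < π j ∧ π j < π p) ↔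
      (j < p ∧ π q < π j ∧ π j < π p) := by
    intro j
    constructor
    · rintro ⟨hj, h2, h3⟩
      refine ⟨hj, ?_, h3⟩
      by_contra hle
      push_neg at hle
      have hne : π j ≠ π q := fun h => absurd (π.injective h) (ne_of_lt (lt_trans hj hpq))
      have hlt : π j < π q := lt_of_le_of_ne hle hne
      have hpp1lt : pp1 < q := by
        rcases lt_or_eq_of_le hpp1q with h | h
        · exact h
        · exfalso; rw [h] at h2; exact absurd hlt (not_lt.mpr (le_of_lt h2))
      exact h213 ⟨j, pp1, q, lt_trans hj hppp1, hpp1lt, h2, hlt⟩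
    · rintro ⟨hj, h2, h3⟩
      exact ⟨hj, lt_of_le_of_lt hpp1le h2, h3⟩
  have hodd' := hodd p pp1 rfl hdes
  -- Compute the cardinality
  have hcard : Nat.card {j : Fin n // j < p ∧ π pp1 < π j ∧ π j < π p}
      = (π p : ℕ) - (π q : ℕ) - 1 := by
    rw [Nat.card_eq_fintype_card, Fintype.card_subtype]
    have : (Finset.univ.filter fun j : Fin n => j < p ∧ π pp1 < π j ∧ π j < π p)
        = (Finset.univ.filter fun j : Fin n => j < p ∧ π q < π j ∧ π j < π p) := by
      apply Finset.filter_congr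
      intro j _
      exact hset j
    rw [this]
    rw [← Fin.card_Ioo (π q) (π p)]
    apply Finset.card_bij (fun j _ => π j)
    · intro j hj
      simp only [Finset.mem_filter] at hj
      exact Finset.mem_Ioo.mpr ⟨hj.2.2.1, hj.2.2.2⟩
    · intro a ha b hb hab
      exact π.injective hab
    · intro v hv
      rw [Finset.mem_Ioo] at hv
      refine ⟨π.symm v, ?_, by simp⟩
      simp only [Finset.mem_filter, Finset.mem_univ, true_and]
      have hv1 : π q < π (π.symm v) := by rw [Equiv.apply_symm_apply]; exact hv.1
      have hv2 : π (π.symm v) < π p := by rw [Equiv.apply_symm_apply]; exact hv.2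
      refine ⟨?_, hv1, hv2⟩
      -- position of v is < p
      set a := π.symm v with ha
      rcases lt_trichotomy a p with h | h | h
      · exact h
      · exfalso; rw [h] at hv2; exact lt_irrefl _ hv2
      · exfalso
        rcases lt_trichotomy a q with h' | h' | h'
        · exact absurd (hA a h h') (not_lt.mpr (le_of_lt hv1))
        · rw [h'] at hv1; exact lt_irrefl _ hv1
        · exact absurd (hq a h') (not_lt.mpr (le_of_lt hv1))
  rw [hcard] at hodd'
  have hqp' : (π q : ℕ) < (π p : ℕ) := hqp
  obtain ⟨k, hk⟩ := hodd'
  exact ⟨k + 1, by omega⟩
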